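/- arXiv:1805.11736 — 9 statements merged into one kernel-verified Lean document; each statement's English description precedes it below -/
import Mathlib

section
/- Let k be a field, A a bialgebra over k, and B an A-comodule algebra with coaction λ : B → A ⊗ B. Suppose there are elements x_1, …, x_n, ω^1, …, ω^n ∈ B and a nonzero element b ∈ B such that x_i ω^j = δ_{ij} b for all 1 ≤ i, j ≤ n, and suppose there are elements t_{ij}, T_{ij}, D ∈ A such that λ(x_i) = Σ_{j=1}^n t_{ij} ⊗ x_j, λ(ω^i) = Σ_{j=1}^n T_{ij} ⊗ ω^j, and λ(b) = D ⊗ b. Then for all 1 ≤ i, j ≤ n one has Σ_{k=1}^n t_{ik} T_{jk} = δ_{ij} D (the quantum cofactor row-expansion identity). -/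
open scoped TensorProduct

lemma tmul_right_cancel_of_ne_zero {k : Type*} [Field k]
    {A B : Type*} [AddCommGroup A] [Module k A] [AddCommGroup B] [Module k B]
    {u v : A} {b : B} (hb : b ≠ 0) (h : u ⊗ₜ[k] b = v ⊗ₜ[k] b) : u = v := by
  obtain ⟨φ, hφ⟩ : ∃ φ : Module.Dual k B, φ b ≠ 0 := by
    by_contra hc
    push_neg at hc
    exact hb ((Module.forall_dual_apply_eq_zero_iff k b).mp hc)
  have h2 := congrArg (fun z => (TensorProduct.rid k A) ((LinearMap.lTensor A φ) z)) h
  simp only [LinearMap.lTensor_tmul, TensorProduct.rid_tmul] at h2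
  exact smul_right_injective A hφ h2

/-- **Quantum cofactor row-expansion identity.**
Let `k` be a field, `A` a bialgebra over `k`, and `B` an `A`-comodule algebra with
coaction `lam : B → A ⊗ B`.  Given elements `x i`, `ω j`, a nonzero `b` with
`x i * ω j = δᵢⱼ b`, and elements `t i j`, `T i j`, `D` of `A` with
`lam (x i) = ∑ j, t i j ⊗ x j`, `lam (ω i) = ∑ j, T i j ⊗ ω j` and `lam b = D ⊗ b`,
one has `∑ m, t i m * T j m = δᵢⱼ D`. -/
theorem quantum_cofactor_row_expansion
    {k : Type*} [Field k]
    {A : Type*} [Ring A] [Bialgebra k A]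
    {B : Type*} [Ring B] [Algebra k B]
    (lam : B →ₐ[k] A ⊗[k] B)
    (hcoassoc : ∀ y : B,
      (Coalgebra.comul (R := k) (A := A)).rTensor B (lam y) =
        (TensorProduct.assoc k A A B).symm (lam.toLinearMap.lTensor A (lam y)))
    (hcounit : ∀ y : B,
      (Coalgebra.counit (R := k) (A := A)).rTensor B (lam y) = (1 : k) ⊗ₜ[k] y)
    (n : ℕ) (x ω : Fin n → B) (b : B) (hb : b ≠ 0)
    (hxω : ∀ i j, x i * ω j = if i = j then b else 0)
    (t T : Fin n → Fin n → A) (D : A)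
    (hx : ∀ i, lam (x i) = ∑ j, t i j ⊗ₜ[k] x j)
    (hω : ∀ i, lam (ω i) = ∑ j, T i j ⊗ₜ[k] ω j)
    (hbD : lam b = D ⊗ₜ[k] b) :
    ∀ i j, ∑ m, t i m * T j m = if i = j then D else 0 := by
  intro i j
  have key : lam (x i * ω j) = (∑ m, t i m * T j m) ⊗ₜ[k] b := by
    rw [map_mul, hx, hω, Finset.sum_mul_sum]
    rw [TensorProduct.sum_tmul]
    refine Finset.sum_congr rfl fun m _ => ?_
    rw [Finset.sum_eq_single m]
    · rw [Algebra.TensorProduct.tmul_mul_tmul, hxω, if_pos rfl]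
    · intro l _ hl
      rw [Algebra.TensorProduct.tmul_mul_tmul, hxω, if_neg (Ne.symm hl),
        TensorProduct.tmul_zero]
    · intro hm; exact absurd (Finset.mem_univ m) hm
  have key2 : lam (x i * ω j) = (if i = j then D else 0) ⊗ₜ[k] b := by
    rw [hxω]
    split_ifs
    · rw [hbD]
    · rw [map_zero, TensorProduct.zero_tmul]
  exact tmul_right_cancel_of_ne_zero hb (key.symm.trans key2)
end

section
/- Let k be a field and H a Hopf algebra over k with antipode S. Let n ≥ 1 and suppose there are elements t_{ij}, T_{ij}, D, E ∈ H (1 ≤ i, j ≤ n) such that Δ(t_{ij}) = Σ_{k=1}^n t_{ik} ⊗ t_{kj} and ε(t_{ij}) = δ_{ij} for all i, j, such that D E = 1 = E D, and such that Σ_{k=1}^n t_{ik} T_{kj} = δ_{ij} D for all i, j. Then Σ_{k=1}^n T_{ik} E t_{kj} = δ_{ij} · 1 for all i, j. Moreover, if D is central in H, then Σ_{k=1}^n T_{ik} t_{kj} = δ_{ij} D for all i, j. -/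
open scoped TensorProduct

/-- In a Hopf algebra `H` over a field `k`, suppose `t i j` are comatrix elements,
`D * E = 1 = E * D`, and `∑ m, t i m * T m j = δᵢⱼ D`.  Then
`∑ m, T i m * E * t m j = δᵢⱼ · 1`, and if moreover `D` is central in `H` then
`∑ m, T i m * t m j = δᵢⱼ D`. -/
theorem quantum_cofactor_left_identities
    {k : Type*} [Field k] {H : Type*} [Ring H] [HopfAlgebra k H]
    (n : ℕ) (hn : 1 ≤ n) (t T : Fin n → Fin n → H) (D E : H)
    (hcomul : ∀ i j, Coalgebra.comul (R := k) (t i j) = ∑ m, t i m ⊗ₜ[k] t m j)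
    (hcounit : ∀ i j, Coalgebra.counit (R := k) (t i j) = if i = j then (1 : k) else 0)
    (hDE : D * E = 1) (hED : E * D = 1)
    (htT : ∀ i j, ∑ m, t i m * T m j = if i = j then D else 0) :
    (∀ i j, ∑ m, T i m * E * t m j = if i = j then (1 : H) else 0) ∧
      ((∀ a : H, D * a = a * D) →
        ∀ i j, ∑ m, T i m * t m j = if i = j then D else 0) := by
  -- antipode identity for comatrix elements
  have hS : ∀ i j, ∑ m, HopfAlgebra.antipode (R := k) (t i m) * t m j
      = if i = j then (1 : H) else 0 := by
    intro i j
    have := HopfAlgebra.mul_antipode_rTensor_comul_apply (R := k) (t i j)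
    rw [hcomul, hcounit] at this
    simp only [map_sum, LinearMap.rTensor_tmul, LinearMap.mul'_apply] at this
    rw [this]
    split <;> simp
  -- T l j = S(t l j) * D
  have hT : ∀ l j, T l j = HopfAlgebra.antipode (R := k) (t l j) * D := by
    intro l j
    have h1 : ∑ i, HopfAlgebra.antipode (R := k) (t l i) * (∑ m, t i m * T m j)
        = ∑ i, HopfAlgebra.antipode (R := k) (t l i) * (if i = j then D else 0) := by
      simp_rw [htT]
    calc T l j = ∑ m, (if l = m then (1:H) else 0) * T m j := by
          simp [Finset.sum_ite_eq, Finset.mul_sum]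
      _ = ∑ m, (∑ i, HopfAlgebra.antipode (R := k) (t l i) * t i m) * T m j := by
          simp_rw [hS]
      _ = ∑ i, HopfAlgebra.antipode (R := k) (t l i) * (∑ m, t i m * T m j) := by
          simp_rw [Finset.sum_mul, Finset.mul_sum, mul_assoc]
          rw [Finset.sum_comm]
      _ = HopfAlgebra.antipode (R := k) (t l j) * D := by
          rw [h1]; simp [Finset.sum_ite_eq]
  constructor
  · intro i j
    calc ∑ m, T i m * E * t m j
        = ∑ m, HopfAlgebra.antipode (R := k) (t i m) * t m j := by
          refine Finset.sum_congr rfl fun m _ => ?_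
          rw [hT, mul_assoc, mul_assoc, ← mul_assoc D, hDE, one_mul]
      _ = if i = j then (1 : H) else 0 := hS i j
  · intro hcen i j
    calc ∑ m, T i m * t m j
        = ∑ m, HopfAlgebra.antipode (R := k) (t i m) * (t m j * D) := by
          simp_rw [hT, mul_assoc, ← hcen]
      _ = (∑ m, HopfAlgebra.antipode (R := k) (t i m) * t m j) * D := by
          simp_rw [Finset.sum_mul, mul_assoc]
      _ = if i = j then D else 0 := by rw [hS]; split <;> simp
end

section
/- Let A be a coquasitriangular bialgebra over a field k, with coquasitriangular form r and convolution inverse r'. Let g ∈ A be a group-like element (Δ(g) = g ⊗ g and ε(g) = 1). Define the k-linear map 𝔍_g : A → A by 𝔍_g(a) = Σ r(a_(1), g) a_(2) r'(a_(3), g). Then 𝔍_g is a bijective k-linear map which is both a k-algebra homomorphism and a k-coalgebra homomorphism (i.e., a bialgebra automorphism of A), and g a = 𝔍_g(a) g for all a ∈ A. -/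
open scoped TensorProduct

/-- The December 2024 `Coalgebra.Repr` (index type `ι` as an implicit field), whose name
Mathlib now uses for a structure taking `ι` as a parameter. -/
structure Coalgebra.ReprOld (R : Type*) {A : Type*}
    [CommSemiring R] [AddCommMonoid A] [Module R A] [CoalgebraStruct R A] (a : A) where
  {ι : Type*}
  (index : Finset ι)
  (left : ι → A)
  (right : ι → A)
  (eq : ∑ i ∈ index, left i ⊗ₜ[R] right i = CoalgebraStruct.comul a)

/-!
With `φ = r(-, g)` and `φ' = r'(-, g)`, group-likeness of `g` turns (CQT1) into multiplicativity
of `φ` and the invertibility of `r` into `φ * φ' = ε = φ' * φ` in the convolution algebra. So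
`𝔍_g a = ∑ φ(a₁) a₂ φ'(a₃)` is conjugation by the convolution unit `φ` through the two commuting
hit actions `a ↼ φ = ∑ φ(a₁) a₂` and `φ ⇀ a = ∑ a₁ φ(a₂)` of the dual algebra on `A`. For any
convolution unit this conjugation is a coalgebra automorphism, with inverse conjugation by `φ'`;
for a multiplicative unit both hit actions are algebra maps, hence so is `𝔍_g`. Finally (CQT3)
with `b = g` reads `(a ↼ φ) g = g (φ ⇀ a)`, and substituting `a := φ' ⇀ a` gives `g a = 𝔍_g(a) g`.
-/

open TensorProduct WithConv
open scoped RingTheory.LinearMap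

namespace Coalgebra

section Hit

variable {R C : Type*} [CommSemiring R] [AddCommMonoid C] [Module R C] [Coalgebra R C]

/-- `f ⇀ c = ∑ c₍₁₎ f(c₍₂₎)`. -/
noncomputable def leftHit (f : WithConv (C →ₗ[R] R)) : Module.End R C :=
  lift (LinearMap.lsmul R C ∘ₗ f.ofConv).flip ∘ₗ comul

/-- `c ↼ f = ∑ f(c₍₁₎) c₍₂₎`. -/
noncomputable def rightHit (f : WithConv (C →ₗ[R] R)) : Module.End R C :=
  lift (LinearMap.lsmul R C ∘ₗ f.ofConv) ∘ₗ comul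

lemma Repr.leftHit_apply {ι : Type*} {c : C} (𝓡 : Repr R c ι)
    (f : WithConv (C →ₗ[R] R)) : leftHit f c = ∑ i ∈ 𝓡.index, f (𝓡.right i) • 𝓡.left i := by
  simp [leftHit, ← 𝓡.eq]

lemma Repr.rightHit_apply {ι : Type*} {c : C} (𝓡 : Repr R c ι)
    (f : WithConv (C →ₗ[R] R)) : rightHit f c = ∑ i ∈ 𝓡.index, f (𝓡.left i) • 𝓡.right i := by
  simp [rightHit, ← 𝓡.eq]

lemma sum_sum_map_tmul_tmul_eq {M : Type*} [AddCommMonoid M] [Module R M]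
    (U : C ⊗[R] (C ⊗[R] C) →ₗ[R] M) (c : C) :
    ∑ i ∈ (ℛ R c).index, ∑ j ∈ (ℛ R ((ℛ R c).left i)).index,
        U ((ℛ R ((ℛ R c).left i)).left j ⊗ₜ
          ((ℛ R ((ℛ R c).left i)).right j ⊗ₜ (ℛ R c).right i)) =
      ∑ i ∈ (ℛ R c).index, ∑ j ∈ (ℛ R ((ℛ R c).right i)).index,
        U ((ℛ R c).left i ⊗ₜ
          ((ℛ R ((ℛ R c).right i)).left j ⊗ₜ (ℛ R ((ℛ R c).right i)).right j)) := by
  simpa only [map_sum] using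
    congr(U $(sum_tmul_tmul_eq (ℛ R c) (fun _ ↦ ℛ R _) (fun _ ↦ ℛ R _)))

lemma leftHit_mul (f g : WithConv (C →ₗ[R] R)) :
    leftHit (f * g) = leftHit f * leftHit g := by
  ext c
  have := sum_sum_map_tmul_tmul_eq (lift ((LinearMap.lsmul R C).flip.compl₂
    (LinearMap.mul' R R ∘ₗ (f.ofConv ⊗ₘ g.ofConv)))) c
  simp only [LinearMap.comp_apply, map_tmul, lift.tmul, LinearMap.compl₂_apply,
    LinearMap.flip_apply, LinearMap.lsmul_apply, LinearMap.mul'_apply] at this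
  rw [Module.End.mul_apply, (ℛ R c).leftHit_apply g, map_sum, (ℛ R c).leftHit_apply (f * g)]
  simp only [map_smul]
  simp only [(ℛ R _).leftHit_apply, (ℛ R _).convMul_apply, Finset.smul_sum,
    Finset.sum_smul, smul_smul]
  rw [← this]
  simp only [mul_comm]

lemma rightHit_mul (f g : WithConv (C →ₗ[R] R)) :
    rightHit (f * g) = rightHit g * rightHit f := by
  ext c
  have := sum_sum_map_tmul_tmul_eq (lift ((LinearMap.lsmul R C ∘ₗ f.ofConv).compl₂
    (lift (LinearMap.lsmul R C ∘ₗ g.ofConv)))) c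
  simp only [lift.tmul, LinearMap.compl₂_apply, LinearMap.comp_apply,
    LinearMap.lsmul_apply] at this
  rw [Module.End.mul_apply, (ℛ R c).rightHit_apply f, map_sum, (ℛ R c).rightHit_apply (f * g)]
  simp only [map_smul]
  simp only [(ℛ R _).rightHit_apply, (ℛ R _).convMul_apply, Finset.smul_sum,
    Finset.sum_smul, smul_smul] at this ⊢
  exact this

lemma commute_leftHit_rightHit (f g : WithConv (C →ₗ[R] R)) :
    Commute (leftHit f) (rightHit g) := by
  ext c
  have := sum_sum_map_tmul_tmul_eq (lift ((LinearMap.lsmul R C ∘ₗ g.ofConv).compl₂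
    (lift (LinearMap.lsmul R C ∘ₗ f.ofConv).flip))) c
  simp only [lift.tmul, LinearMap.compl₂_apply, LinearMap.comp_apply, LinearMap.flip_apply,
    LinearMap.lsmul_apply] at this
  rw [Module.End.mul_apply, Module.End.mul_apply, (ℛ R c).rightHit_apply, map_sum,
    (ℛ R c).leftHit_apply, map_sum]
  simp only [map_smul]
  simp only [(ℛ R _).rightHit_apply, (ℛ R _).leftHit_apply, Finset.smul_sum,
    smul_smul] at this ⊢
  rw [← this]
  simp only [mul_comm]

@[simp] lemma leftHit_one : leftHit (1 : WithConv (C →ₗ[R] R)) = 1 := by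
  ext c
  simpa only [(ℛ R c).leftHit_apply, LinearMap.convOne_apply, Algebra.algebraMap_self,
    RingHom.id_apply, Module.End.one_apply, map_sum, lift.tmul, LinearMap.flip_apply,
    LinearMap.lsmul_apply, one_smul]
    using congr(lift (LinearMap.lsmul R C).flip $(sum_tmul_counit_eq (ℛ R c)))

@[simp] lemma rightHit_one : rightHit (1 : WithConv (C →ₗ[R] R)) = 1 := by
  ext c
  simp [(ℛ R c).rightHit_apply, sum_counit_smul]

lemma comul_comp_leftHit (f : WithConv (C →ₗ[R] R)) :
    comul ∘ₗ leftHit f = (leftHit f).lTensor C ∘ₗ comul := by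
  ext c
  have := sum_sum_map_tmul_tmul_eq (lift (LinearMap.lsmul R (C ⊗[R] C) ∘ₗ f.ofConv).flip ∘ₗ
    (_root_.TensorProduct.assoc R C C C).symm.toLinearMap) c
  simp only [LinearMap.comp_apply, LinearEquiv.coe_coe, assoc_symm_tmul, lift.tmul,
    LinearMap.flip_apply, LinearMap.lsmul_apply] at this
  rw [LinearMap.comp_apply, LinearMap.comp_apply, (ℛ R c).leftHit_apply, ← (ℛ R c).eq,
    map_sum, map_sum]
  simp only [map_smul, LinearMap.lTensor_tmul]
  simp only [(ℛ R _).leftHit_apply, ← (ℛ R _).eq, Finset.smul_sum, tmul_sum,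
    tmul_smul] at this ⊢
  exact this

lemma comul_comp_rightHit (f : WithConv (C →ₗ[R] R)) :
    comul ∘ₗ rightHit f = (rightHit f).rTensor C ∘ₗ comul := by
  ext c
  have := sum_sum_map_tmul_tmul_eq (lift (LinearMap.lsmul R (C ⊗[R] C) ∘ₗ f.ofConv)) c
  simp only [lift.tmul, LinearMap.comp_apply, LinearMap.lsmul_apply] at this
  rw [LinearMap.comp_apply, LinearMap.comp_apply, (ℛ R c).rightHit_apply, ← (ℛ R c).eq,
    map_sum, map_sum]
  simp only [map_smul, LinearMap.rTensor_tmul]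
  simp only [(ℛ R _).rightHit_apply, ← (ℛ R _).eq, Finset.smul_sum, sum_tmul,
    smul_tmul'] at this ⊢
  exact this.symm

lemma lTensor_rightHit_comp_comul (f : WithConv (C →ₗ[R] R)) :
    (rightHit f).lTensor C ∘ₗ comul = (leftHit f).rTensor C ∘ₗ comul := by
  ext c
  have := sum_sum_map_tmul_tmul_eq ((lift (LinearMap.lsmul R C ∘ₗ f.ofConv)).lTensor C) c
  simp only [LinearMap.lTensor_tmul, lift.tmul, LinearMap.comp_apply,
    LinearMap.lsmul_apply] at this
  rw [LinearMap.comp_apply, LinearMap.comp_apply, ← (ℛ R c).eq, map_sum, map_sum]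
  simp only [LinearMap.lTensor_tmul, LinearMap.rTensor_tmul, (ℛ R _).rightHit_apply,
    (ℛ R _).leftHit_apply, tmul_sum, sum_tmul, tmul_smul, smul_tmul'] at this ⊢
  exact this.symm

lemma counit_comp_leftHit (f : WithConv (C →ₗ[R] R)) : counit ∘ₗ leftHit f = f.ofConv := by
  ext c
  conv_rhs => rw [← sum_counit_smul (ℛ R c)]
  simp [(ℛ R c).leftHit_apply, mul_comm]

lemma ofConv_comp_rightHit (f g : WithConv (C →ₗ[R] R)) :
    f.ofConv ∘ₗ rightHit g = (g * f).ofConv := by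
  ext c
  simp [(ℛ R c).rightHit_apply, (ℛ R c).convMul_apply]

@[simp] lemma leftHit_leftHit_inv (u : (WithConv (C →ₗ[R] R))ˣ) (c : C) :
    leftHit u.val (leftHit u⁻¹.val c) = c := by
  rw [← Module.End.mul_apply, ← leftHit_mul, u.mul_inv, leftHit_one, Module.End.one_apply]

@[simp] lemma rightHit_rightHit_inv (u : (WithConv (C →ₗ[R] R))ˣ) (c : C) :
    rightHit u.val (rightHit u⁻¹.val c) = c := by
  rw [← Module.End.mul_apply, ← rightHit_mul, u.inv_mul, rightHit_one, Module.End.one_apply]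

lemma bijective_leftHit (u : (WithConv (C →ₗ[R] R))ˣ) : Function.Bijective (leftHit u.val) :=
  Function.bijective_iff_has_inverse.mpr
    ⟨leftHit u⁻¹.val, leftHit_leftHit_inv u⁻¹, leftHit_leftHit_inv u⟩

lemma bijective_rightHit (u : (WithConv (C →ₗ[R] R))ˣ) : Function.Bijective (rightHit u.val) :=
  Function.bijective_iff_has_inverse.mpr
    ⟨rightHit u⁻¹.val, rightHit_rightHit_inv u⁻¹, rightHit_rightHit_inv u⟩

end Hit

section HitConj

variable {R C : Type*} [CommSemiring R] [AddCommMonoid C] [Module R C] [Coalgebra R C]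

/-- `hitConj u c = ∑ u(c₍₁₎) c₍₂₎ u⁻¹(c₍₃₎)`; for `u = r(-, g)` this is `𝔍_g`. -/
noncomputable def hitConj (u : (WithConv (C →ₗ[R] R))ˣ) : Module.End R C :=
  leftHit u⁻¹.val * rightHit u.val

variable (u : (WithConv (C →ₗ[R] R))ˣ)

lemma bijective_hitConj : Function.Bijective (hitConj u) :=
  (bijective_leftHit u⁻¹).comp (bijective_rightHit u)

lemma counit_comp_hitConj : counit ∘ₗ hitConj u = counit := by
  rw [hitConj, Module.End.mul_eq_comp, ← LinearMap.comp_assoc, counit_comp_leftHit,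
    ofConv_comp_rightHit, u.mul_inv]
  ext c
  simp

lemma comul_comp_hitConj :
    comul ∘ₗ hitConj u = (hitConj u ⊗ₘ hitConj u) ∘ₗ comul := by
  have key : leftHit u⁻¹.val * rightHit u.val * leftHit u.val = rightHit u.val := by
    rw [(commute_leftHit_rightHit _ _).eq, mul_assoc, ← leftHit_mul, u.inv_mul, leftHit_one,
      mul_one]
  calc comul ∘ₗ hitConj u = ((leftHit u⁻¹.val).lTensor C ∘ₗ comul) ∘ₗ rightHit u.val := by
        rw [hitConj, Module.End.mul_eq_comp, ← LinearMap.comp_assoc, comul_comp_leftHit]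
    _ = (rightHit u.val ⊗ₘ leftHit u⁻¹.val) ∘ₗ comul := by
        rw [LinearMap.comp_assoc, comul_comp_rightHit, ← LinearMap.comp_assoc,
          LinearMap.lTensor_comp_rTensor]
    _ = (hitConj u ⊗ₘ leftHit u⁻¹.val) ∘ₗ (leftHit u.val).rTensor C ∘ₗ comul := by
        rw [← LinearMap.comp_assoc, LinearMap.map_comp_rTensor, hitConj,
          ← Module.End.mul_eq_comp, key]
    _ = (hitConj u ⊗ₘ hitConj u) ∘ₗ comul := by
        rw [← lTensor_rightHit_comp_comul, ← LinearMap.comp_assoc, LinearMap.map_comp_lTensor]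
        rfl

end HitConj

section Bialgebra

variable {R A : Type*} [CommSemiring R] [Semiring A] [Bialgebra R A]

lemma leftHit_map_mul {f : WithConv (A →ₗ[R] R)} (hf : ∀ x y, f (x * y) = f x * f y)
    (x y : A) : leftHit f (x * y) = leftHit f x * leftHit f y := by
  rw [((ℛ R x).mul (ℛ R y)).leftHit_apply, (ℛ R x).leftHit_apply, (ℛ R y).leftHit_apply,
    Finset.sum_mul_sum, Repr.mul_index, Finset.sum_product]
  simp only [Repr.mul_left, Repr.mul_right, hf, smul_mul_smul_comm]

lemma rightHit_map_mul {f : WithConv (A →ₗ[R] R)} (hf : ∀ x y, f (x * y) = f x * f y)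
    (x y : A) : rightHit f (x * y) = rightHit f x * rightHit f y := by
  rw [((ℛ R x).mul (ℛ R y)).rightHit_apply, (ℛ R x).rightHit_apply, (ℛ R y).rightHit_apply,
    Finset.sum_mul_sum, Repr.mul_index, Finset.sum_product]
  simp only [Repr.mul_left, Repr.mul_right, hf, smul_mul_smul_comm]

lemma leftHit_apply_one (f : WithConv (A →ₗ[R] R)) : leftHit f 1 = f 1 • 1 := by
  simp [leftHit, Algebra.TensorProduct.one_def]

lemma rightHit_apply_one (f : WithConv (A →ₗ[R] R)) : rightHit f 1 = f 1 • 1 := by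
  simp [rightHit, Algebra.TensorProduct.one_def]

variable (u : (WithConv (A →ₗ[R] R))ˣ)

lemma val_apply_one_of_map_mul (hu : ∀ x y, u.val (x * y) = u.val x * u.val y) :
    u.val 1 = 1 := by
  have hunit : u.val 1 * u⁻¹.val 1 = 1 := by
    simpa only [LinearMap.convMul_apply, Bialgebra.comul_one, Algebra.TensorProduct.one_def,
      map_tmul, LinearMap.mul'_apply, LinearMap.convOne_apply, Bialgebra.counit_one, map_one]
      using congr($(u.mul_inv) (1 : A))
  have hidem : u.val 1 * u.val 1 = u.val 1 := by rw [← hu, mul_one]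
  exact (IsUnit.of_mul_eq_one _ hunit).mul_eq_left.mp hidem

lemma leftHit_inv_map_mul (hu : ∀ x y, u.val (x * y) = u.val x * u.val y) (x y : A) :
    leftHit u⁻¹.val (x * y) = leftHit u⁻¹.val x * leftHit u⁻¹.val y :=
  (bijective_leftHit u).injective (by simp [leftHit_map_mul hu])

lemma leftHit_inv_apply_one (hu : ∀ x y, u.val (x * y) = u.val x * u.val y) :
    leftHit u⁻¹.val (1 : A) = 1 :=
  (bijective_leftHit u).injective <| by
    rw [leftHit_leftHit_inv, leftHit_apply_one, val_apply_one_of_map_mul u hu, one_smul]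

lemma hitConj_map_mul (hu : ∀ x y, u.val (x * y) = u.val x * u.val y) (x y : A) :
    hitConj u (x * y) = hitConj u x * hitConj u y := by
  simp only [hitConj, Module.End.mul_apply, rightHit_map_mul hu, leftHit_inv_map_mul u hu]

lemma hitConj_apply_one (hu : ∀ x y, u.val (x * y) = u.val x * u.val y) :
    hitConj u (1 : A) = 1 := by
  rw [hitConj, Module.End.mul_apply, rightHit_apply_one, val_apply_one_of_map_mul u hu, one_smul,
    leftHit_inv_apply_one u hu]

lemma mul_eq_hitConj_mul {g : A} (hg : ∀ x, rightHit u.val x * g = g * leftHit u.val x)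
    (a : A) : g * a = hitConj u a * g := by
  rw [hitConj, (commute_leftHit_rightHit _ _).eq, Module.End.mul_apply, hg,
    leftHit_leftHit_inv]

end Bialgebra

end Coalgebra

namespace Coalgebra.ReprOld

variable {R A : Type*} [CommSemiring R] [AddCommMonoid A] [Module R A] [CoalgebraStruct R A]

universe u in
theorem nonempty (a : A) : Nonempty (ReprOld.{_, _, u} R a) := by
  obtain ⟨n, x, y, hxy⟩ := TensorProduct.exists_sum_tmul_eq (comul (R := R) a)
  refine ⟨⟨(Finset.univ : Finset (ULift (Fin n))), x ∘ ULift.down, y ∘ ULift.down, ?_⟩⟩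
  rw [hxy]
  exact Fintype.sum_equiv Equiv.ulift _ _ fun _ ↦ rfl

@[simps]
def toRepr {a : A} (ra : ReprOld R a) : Repr R a ra.ι := ⟨ra.index, ra.left, ra.right, ra.eq⟩

def ofTmulSelf {g : A} (hg : comul (R := R) g = g ⊗ₜ g) : ReprOld R g where
  ι := PUnit
  index := {PUnit.unit}
  left _ := g
  right _ := g
  eq := by simp [hg]

end Coalgebra.ReprOld

section
open Coalgebra

variable {R C : Type*} [CommSemiring R] [AddCommMonoid C] [Module R C] [Coalgebra R C]
  {r r' : C →ₗ[R] C →ₗ[R] R} {g : C}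

theorem toConv_flip_mul_toConv_flip_eq_one
    (hinv : ∀ (a b : C) (ra : ReprOld R a) (rb : ReprOld R b),
      ∑ i ∈ ra.index, ∑ j ∈ rb.index, r (ra.left i) (rb.left j) * r' (ra.right i) (rb.right j) =
        counit (R := R) a * counit (R := R) b)
    (hg : comul (R := R) g = g ⊗ₜ g) (hgε : counit (R := R) g = 1) :
    toConv (r.flip g) * toConv (r'.flip g) = 1 := by
  ext a
  obtain ⟨ra⟩ := ReprOld.nonempty (R := R) a
  have := hinv a g ra (.ofTmulSelf hg)
  simp only [ReprOld.ofTmulSelf, Finset.sum_singleton, hgε, mul_one] at this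
  rw [ra.toRepr.convMul_apply]
  simpa using this

theorem eq_leftHit_mul_rightHit {J : C →ₗ[R] C}
    (hJ : ∀ (a : C) (ra : ReprOld R a) (rr : ∀ i : ra.ι, ReprOld R (ra.right i)),
      J a = ∑ i ∈ ra.index, ∑ j ∈ (rr i).index,
        (r (ra.left i) g * r' ((rr i).right j) g) • (rr i).left j) :
    J = leftHit (toConv (r'.flip g)) * rightHit (toConv (r.flip g)) := by
  ext a
  obtain ⟨ra⟩ := ReprOld.nonempty (R := R) a
  let rr i : ReprOld R (ra.right i) := (ReprOld.nonempty _).some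
  rw [hJ a ra rr, Module.End.mul_apply, ra.toRepr.rightHit_apply, map_sum]
  refine Finset.sum_congr rfl fun i _ ↦ ?_
  simp only [ReprOld.toRepr_left, ReprOld.toRepr_right]
  rw [map_smul, (rr i).toRepr.leftHit_apply, Finset.smul_sum]
  simp [smul_smul]

end

section
open Coalgebra

variable {R A : Type*} [CommSemiring R] [Semiring A] [Bialgebra R A]
  {r : A →ₗ[R] A →ₗ[R] R} {g : A}

theorem flip_map_mul
    (hCQT1 : ∀ (a b c : A) (rc : ReprOld R c),
      r (a * b) c = ∑ i ∈ rc.index, r a (rc.left i) * r b (rc.right i))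
    (hg : comul (R := R) g = g ⊗ₜ g) (x y : A) :
    r.flip g (x * y) = r.flip g x * r.flip g y := by
  simpa [ReprOld.ofTmulSelf] using hCQT1 x y g (.ofTmulSelf hg)

theorem rightHit_flip_mul_eq_mul_leftHit_flip
    (hCQT3 : ∀ (a b : A) (ra : ReprOld R a) (rb : ReprOld R b),
      ∑ i ∈ ra.index, ∑ j ∈ rb.index, r (ra.left i) (rb.left j) • (ra.right i * rb.right j) =
        ∑ i ∈ ra.index, ∑ j ∈ rb.index, r (ra.right i) (rb.right j) • (rb.left j * ra.left i))
    (hg : comul (R := R) g = g ⊗ₜ g) (x : A) :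
    rightHit (toConv (r.flip g)) x * g = g * leftHit (toConv (r.flip g)) x := by
  obtain ⟨rx⟩ := ReprOld.nonempty (R := R) x
  have := hCQT3 x g rx (.ofTmulSelf hg)
  simp only [ReprOld.ofTmulSelf, Finset.sum_singleton] at this
  rw [rx.toRepr.rightHit_apply, rx.toRepr.leftHit_apply, Finset.sum_mul, Finset.mul_sum]
  simpa [smul_mul_assoc, mul_smul_comm] using this

end

theorem hayashi_conjugation_automorphism_general
    {k : Type*} [Field k] {A : Type*} [Ring A] [Bialgebra k A]
    (r r' : A →ₗ[k] A →ₗ[k] k)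
    (hinv₁ : ∀ (a b : A) (ra : Coalgebra.ReprOld k a) (rb : Coalgebra.ReprOld k b),
      ∑ i ∈ ra.index, ∑ j ∈ rb.index,
          r (ra.left i) (rb.left j) * r' (ra.right i) (rb.right j) =
        Coalgebra.counit (R := k) a * Coalgebra.counit (R := k) b)
    (hinv₂ : ∀ (a b : A) (ra : Coalgebra.ReprOld k a) (rb : Coalgebra.ReprOld k b),
      ∑ i ∈ ra.index, ∑ j ∈ rb.index,
          r' (ra.left i) (rb.left j) * r (ra.right i) (rb.right j) =
        Coalgebra.counit (R := k) a * Coalgebra.counit (R := k) b)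
    (hCQT1 : ∀ (a b c : A) (rc : Coalgebra.ReprOld k c),
      r (a * b) c = ∑ i ∈ rc.index, r a (rc.left i) * r b (rc.right i))
    (hCQT3 : ∀ (a b : A) (ra : Coalgebra.ReprOld k a) (rb : Coalgebra.ReprOld k b),
      ∑ i ∈ ra.index, ∑ j ∈ rb.index,
          r (ra.left i) (rb.left j) • (ra.right i * rb.right j) =
        ∑ i ∈ ra.index, ∑ j ∈ rb.index,
          r (ra.right i) (rb.right j) • (rb.left j * ra.left i))
    (g : A) (hg : Coalgebra.comul (R := k) g = g ⊗ₜ[k] g)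
    (hgε : Coalgebra.counit (R := k) g = 1)
    (J : A →ₗ[k] A)
    (hJ : ∀ (a : A) (ra : Coalgebra.ReprOld k a)
        (rr : ∀ i : ra.ι, Coalgebra.ReprOld k (ra.right i)),
      J a = ∑ i ∈ ra.index, ∑ j ∈ (rr i).index,
        (r (ra.left i) g * r' ((rr i).right j) g) • (rr i).left j) :
    Function.Bijective J ∧
      (∀ a b : A, J (a * b) = J a * J b) ∧ J 1 = 1 ∧
      (∀ a : A, Coalgebra.comul (R := k) (J a) =
        TensorProduct.map J J (Coalgebra.comul (R := k) a)) ∧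
      (∀ a : A, Coalgebra.counit (R := k) (J a) = Coalgebra.counit (R := k) a) ∧
      (∀ a : A, g * a = J a * g) := by
  let u : (WithConv (A →ₗ[k] k))ˣ :=
    ⟨toConv (r.flip g), toConv (r'.flip g), toConv_flip_mul_toConv_flip_eq_one hinv₁ hg hgε,
      toConv_flip_mul_toConv_flip_eq_one hinv₂ hg hgε⟩
  have hu : ∀ x y, u.val (x * y) = u.val x * u.val y := flip_map_mul hCQT1 hg
  obtain rfl : J = Coalgebra.hitConj u := eq_leftHit_mul_rightHit hJ
  exact ⟨Coalgebra.bijective_hitConj u, Coalgebra.hitConj_map_mul u hu,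
    Coalgebra.hitConj_apply_one u hu, fun a ↦ congr($(Coalgebra.comul_comp_hitConj u) a),
    fun a ↦ congr($(Coalgebra.counit_comp_hitConj u) a),
    Coalgebra.mul_eq_hitConj_mul u (rightHit_flip_mul_eq_mul_leftHit_flip hCQT3 hg)⟩

/-- **Hayashi's lemma.**  Let `A` be a coquasitriangular bialgebra over a field `k`,
with coquasitriangular form `r` and convolution inverse `r'` (axioms stated via
arbitrary Sweedler representations `Coalgebra.Repr`).  Let `g` be group-like and let
`J : A → A` be the linear map `J a = ∑ r(a₍₁₎, g) a₍₂₎ r'(a₍₃₎, g)`.  Then `J` is a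
bijective algebra and coalgebra endomorphism of `A` (i.e. a bialgebra automorphism),
and `g * a = J a * g` for all `a`. -/
theorem hayashi_conjugation_automorphism
    {k : Type*} [Field k] {A : Type*} [Ring A] [Bialgebra k A]
    (r r' : A →ₗ[k] A →ₗ[k] k)
    (hinv₁ : ∀ (a b : A) (ra : Coalgebra.ReprOld k a) (rb : Coalgebra.ReprOld k b),
      ∑ i ∈ ra.index, ∑ j ∈ rb.index,
          r (ra.left i) (rb.left j) * r' (ra.right i) (rb.right j) =
        Coalgebra.counit (R := k) a * Coalgebra.counit (R := k) b)
    (hinv₂ : ∀ (a b : A) (ra : Coalgebra.ReprOld k a) (rb : Coalgebra.ReprOld k b),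
      ∑ i ∈ ra.index, ∑ j ∈ rb.index,
          r' (ra.left i) (rb.left j) * r (ra.right i) (rb.right j) =
        Coalgebra.counit (R := k) a * Coalgebra.counit (R := k) b)
    (hCQT1 : ∀ (a b c : A) (rc : Coalgebra.ReprOld k c),
      r (a * b) c = ∑ i ∈ rc.index, r a (rc.left i) * r b (rc.right i))
    (hCQT2 : ∀ (a b c : A) (ra : Coalgebra.ReprOld k a),
      r a (b * c) = ∑ i ∈ ra.index, r (ra.right i) b * r (ra.left i) c)
    (hCQT3 : ∀ (a b : A) (ra : Coalgebra.ReprOld k a) (rb : Coalgebra.ReprOld k b),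
      ∑ i ∈ ra.index, ∑ j ∈ rb.index,
          r (ra.left i) (rb.left j) • (ra.right i * rb.right j) =
        ∑ i ∈ ra.index, ∑ j ∈ rb.index,
          r (ra.right i) (rb.right j) • (rb.left j * ra.left i))
    (g : A) (hg : Coalgebra.comul (R := k) g = g ⊗ₜ[k] g)
    (hgε : Coalgebra.counit (R := k) g = 1)
    (J : A →ₗ[k] A)
    (hJ : ∀ (a : A) (ra : Coalgebra.ReprOld k a)
        (rr : ∀ i : ra.ι, Coalgebra.ReprOld k (ra.right i)),
      J a = ∑ i ∈ ra.index, ∑ j ∈ (rr i).index,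
        (r (ra.left i) g * r' ((rr i).right j) g) • (rr i).left j) :
    Function.Bijective J ∧
      (∀ a b : A, J (a * b) = J a * J b) ∧ J 1 = 1 ∧
      (∀ a : A, Coalgebra.comul (R := k) (J a) =
        TensorProduct.map J J (Coalgebra.comul (R := k) a)) ∧
      (∀ a : A, Coalgebra.counit (R := k) (J a) = Coalgebra.counit (R := k) a) ∧
      (∀ a : A, g * a = J a * g) :=
  hayashi_conjugation_automorphism_general r r' hinv₁ hinv₂ hCQT1 hCQT3 g hg hgε J hJ
end

section
/- Let k be a field, A a bialgebra over k, X = {1, …, n}, and let g, f : X × X → X be maps written g_i(j) and f_j(i). Let q_{ij} ∈ k^× for i, j ∈ X, and let t_{ij} ∈ A satisfy Δ(t_{ij}) = Σ_{k∈X} t_{ik} ⊗ t_{kj} for all i, j. Let r : A × A → k be a k-bilinear map satisfying (CQT1) r(ab, c) = Σ r(a, c_(1)) r(b, c_(2)) for all a, b, c ∈ A, and whose values on the generators are r(t_{ik}, t_{jℓ}) = q_{ji} δ_{k, g_j(i)} δ_{ℓ, f_i(j)}. Fix N ≥ 1 and j_1, …, j_N ∈ X, fix scalars α : X^N → k, and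 set D := Σ_{(i_1, …, i_N) ∈ X^N} α(i_1, …, i_N) t_{j_1 i_1} ⋯ t_{j_N i_N}. For a, b ∈ X define recursively a_0 := a and a_s := f_{j_s}(a_{s−1}) for 1 ≤ s ≤ N. Then r(D, t_{ab}) = δ_{b, a_N} · α(g_{a_0}(j_1), g_{a_1}(j_2), …, g_{a_{N−1}}(j_N)) · q_{a_0 j_1} q_{a_1 j_2} ⋯ q_{a_{N−1} j_N}. -/
open scoped TensorProduct

/-!
Since `Δ(t_{ab}) = ∑ₘ t_{am} ⊗ t_{mb}`, (CQT1) gives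
`r(t_{ji} P, t_{ab}) = ∑ₘ r(t_{ji}, t_{am}) r(P, t_{mb})`, and by the values of `r` on generators
only `m = f_j(a)` survives, provided `i = g_a(j)`. Peeling off the factors of a monomial
`t_{j₁i₁} ⋯ t_{j_N i_N}` one at a time thus walks `a` along `a_s = f_{j_s}(a_{s-1})`, picking up
`q_{a_{s-1} j_s}` and forcing `i_s = g_{a_{s-1}}(j_s)`; the last factor forces `b = a_N`.
So exactly one monomial of `D` contributes.
-/

universe u

section CoquasitriangularComatrix

variable {k A : Type*} [CommSemiring k] [Semiring A] [Bialgebra k A] {n : ℕ}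
  {t : Fin n → Fin n → A} {r : A →ₗ[k] A →ₗ[k] k}

theorem apply_mul_comatrix_eq_sum
    (hcomul : ∀ i j, Coalgebra.comul (R := k) (t i j) = ∑ m, t i m ⊗ₜ[k] t m j)
    (hCQT1 : ∀ (a b c : A) (ι : Type u) (rc : Coalgebra.Repr k c ι),
      r (a * b) c = ∑ i ∈ rc.index, r a (rc.left i) * r b (rc.right i))
    (x y : A) (a b : Fin n) :
    r (x * y) (t a b) = ∑ m, r x (t a m) * r y (t m b) := by
  let rc : Coalgebra.Repr k (t a b) (ULift.{u} (Fin n)) :=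
    { index := Finset.univ
      left := fun m => t a m.down
      right := fun m => t m.down b
      eq := (Equiv.ulift.sum_comp fun m => t a m ⊗ₜ[k] t m b).trans (hcomul a b).symm }
  exact (hCQT1 x y _ _ rc).trans (Equiv.ulift.sum_comp fun m => r x (t a m) * r y (t m b))

variable {g f : Fin n → Fin n → Fin n} {q : Fin n → Fin n → k}

theorem apply_comatrix_mul
    (hcomul : ∀ i j, Coalgebra.comul (R := k) (t i j) = ∑ m, t i m ⊗ₜ[k] t m j)
    (hCQT1 : ∀ (a b c : A) (ι : Type u) (rc : Coalgebra.Repr k c ι),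
      r (a * b) c = ∑ i ∈ rc.index, r a (rc.left i) * r b (rc.right i))
    (hrt : ∀ i c j l, r (t i c) (t j l) = if c = g j i ∧ l = f i j then q j i else 0)
    (j i : Fin n) (P : A) (a b : Fin n) :
    r (t j i * P) (t a b) = if i = g a j then q a j * r P (t (f j a) b) else 0 := by
  rw [apply_mul_comatrix_eq_sum hcomul hCQT1]
  split_ifs with hi <;> simp [hrt, hi]

theorem apply_ofFn_prod_comatrix
    (hcomul : ∀ i j, Coalgebra.comul (R := k) (t i j) = ∑ m, t i m ⊗ₜ[k] t m j)
    (hCQT1 : ∀ (a b c : A) (ι : Type u) (rc : Coalgebra.Repr k c ι),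
      r (a * b) c = ∑ i ∈ rc.index, r a (rc.left i) * r b (rc.right i))
    (hrt : ∀ i c j l, r (t i c) (t j l) = if c = g j i ∧ l = f i j then q j i else 0)
    (N : ℕ) (jseq iseq : Fin (N + 1) → Fin n) (aseq : ℕ → Fin n)
    (haS : ∀ s : Fin (N + 1), aseq (s.1 + 1) = f (jseq s) (aseq s.1)) (b : Fin n) :
    r (List.ofFn fun s => t (jseq s) (iseq s)).prod (t (aseq 0) b) =
      if iseq = (fun s => g (aseq s.1) (jseq s)) ∧ b = aseq (N + 1)
      then ∏ s, q (aseq s.1) (jseq s) else 0 := by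
  induction N generalizing aseq with
  | zero =>
    have ha1 : aseq 1 = f (jseq 0) (aseq 0) := haS 0
    rw [List.ofFn_succ, List.ofFn_zero, List.prod_singleton, hrt, ← ha1]
    simp [funext_iff]
  | succ N ih =>
    have ha1 : aseq 1 = f (jseq 0) (aseq 0) := haS 0
    have hshift := ih (fun s => jseq s.succ) (fun s => iseq s.succ) (fun s => aseq (s + 1))
      fun s => haS s.succ
    have hcons : (iseq = fun s => g (aseq s.1) (jseq s)) ↔ iseq 0 = g (aseq 0) (jseq 0) ∧
        (fun s : Fin (N + 1) => iseq s.succ) = fun s => g (aseq (s.1 + 1)) (jseq s.succ) := by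
      simp only [funext_iff, Fin.forall_fin_succ, Fin.val_zero, Fin.val_succ]
    rw [List.ofFn_succ, List.prod_cons, apply_comatrix_mul hcomul hCQT1 hrt, ← ha1,
      Fin.prod_univ_succ, hshift]
    simp only [hcons, and_assoc, ite_and, mul_ite, mul_zero, Fin.val_zero, Fin.val_succ]

end CoquasitriangularComatrix

theorem r_quantum_determinant_set_theoretical_general
    {k : Type*} [Field k] {A : Type*} [Ring A] [Bialgebra k A]
    (n : ℕ) (g f : Fin n → Fin n → Fin n)
    (q : Fin n → Fin n → k)
    (t : Fin n → Fin n → A)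
    (hcomul : ∀ i j, Coalgebra.comul (R := k) (t i j) = ∑ m, t i m ⊗ₜ[k] t m j)
    (r : A →ₗ[k] A →ₗ[k] k)
    (hCQT1 : ∀ (a b c : A) (ι : Type*) (rc : Coalgebra.Repr k c ι),
      r (a * b) c = ∑ i ∈ rc.index, r a (rc.left i) * r b (rc.right i))
    (hrt : ∀ i c j l, r (t i c) (t j l) =
      if c = g j i ∧ l = f i j then q j i else 0)
    (N : ℕ) (hN : 1 ≤ N) (jseq : Fin N → Fin n)
    (α : (Fin N → Fin n) → k) (D : A)
    (hD : D = ∑ iseq : Fin N → Fin n,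
      α iseq • (List.ofFn fun s => t (jseq s) (iseq s)).prod)
    (aseq : Fin n → ℕ → Fin n)
    (ha0 : ∀ a, aseq a 0 = a)
    (haS : ∀ (a : Fin n) (s : Fin N), aseq a (s.1 + 1) = f (jseq s) (aseq a s.1)) :
    ∀ a b : Fin n,
      r D (t a b) =
        (if b = aseq a N then (1 : k) else 0) *
          (α (fun s => g (aseq a s.1) (jseq s)) *
            ∏ s : Fin N, q (aseq a s.1) (jseq s)) := by
  intro a b
  obtain ⟨M, rfl⟩ := Nat.exists_eq_add_of_le' hN
  have hmonomial (iseq : Fin (M + 1) → Fin n) := by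
    simpa only [ha0] using
      apply_ofFn_prod_comatrix hcomul hCQT1 hrt M jseq iseq (aseq a) (haS a) b
  calc r D (t a b)
      = ∑ iseq, α iseq * if (iseq = fun s => g (aseq a s.1) (jseq s)) ∧ b = aseq a (M + 1)
          then ∏ s, q (aseq a s.1) (jseq s) else 0 := by
        simp only [hD, map_sum, map_smul, LinearMap.sum_apply, LinearMap.smul_apply, smul_eq_mul,
          hmonomial]
    _ = _ := by
        by_cases hb : b = aseq a (M + 1) <;> simp [hb]

/-- Value of the coquasitriangular form on the quantum determinant, for braidings
coming from a set-theoretical solution `c(i,j) = (g_i(j), f_j(i))` with cocycle `q`.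
Here `g i j = g_i(j)`, `f j i = f_j(i)`, the `t i j` are comatrix elements
with `r(t_{ik}, t_{jℓ}) = q_{ji} δ_{k, g_j(i)} δ_{ℓ, f_i(j)}`, `r` satisfies (CQT1),
and `D = ∑_{i₁,…,i_N} α(i₁,…,i_N) t_{j₁ i₁} ⋯ t_{j_N i_N}`.  With `a₀ := a`,
`a_s := f_{j_s}(a_{s-1})`, one has
`r(D, t_{ab}) = δ_{b, a_N} · α(g_{a₀}(j₁),…,g_{a_{N-1}}(j_N)) · q_{a₀ j₁} ⋯ q_{a_{N-1} j_N}`. -/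
theorem r_quantum_determinant_set_theoretical
    {k : Type*} [Field k] {A : Type*} [Ring A] [Bialgebra k A]
    (n : ℕ) (g f : Fin n → Fin n → Fin n)
    (q : Fin n → Fin n → k) (hq : ∀ i j, q i j ≠ 0)
    (t : Fin n → Fin n → A)
    (hcomul : ∀ i j, Coalgebra.comul (R := k) (t i j) = ∑ m, t i m ⊗ₜ[k] t m j)
    (r : A →ₗ[k] A →ₗ[k] k)
    (hCQT1 : ∀ (a b c : A) (ι : Type*) (rc : Coalgebra.Repr k c ι),
      r (a * b) c = ∑ i ∈ rc.index, r a (rc.left i) * r b (rc.right i))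
    (hrt : ∀ i c j l, r (t i c) (t j l) =
      if c = g j i ∧ l = f i j then q j i else 0)
    (N : ℕ) (hN : 1 ≤ N) (jseq : Fin N → Fin n)
    (α : (Fin N → Fin n) → k) (D : A)
    (hD : D = ∑ iseq : Fin N → Fin n,
      α iseq • (List.ofFn fun s => t (jseq s) (iseq s)).prod)
    (aseq : Fin n → ℕ → Fin n)
    (ha0 : ∀ a, aseq a 0 = a)
    (haS : ∀ (a : Fin n) (s : Fin N), aseq a (s.1 + 1) = f (jseq s) (aseq a s.1)) :
    ∀ a b : Fin n,
      r D (t a b) =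
        (if b = aseq a N then (1 : k) else 0) *
          (α (fun s => g (aseq a s.1) (jseq s)) *
            ∏ s : Fin N, q (aseq a s.1) (jseq s)) :=
  r_quantum_determinant_set_theoretical_general n g f q t hcomul r hCQT1 hrt N hN jseq α D hD aseq
    ha0 haS
end

section
/- In the setting of the previous proposition, assume in addition: the cocycle is constant, q_{ij} = q ∈ k^× for all i, j ∈ X; each map f_{j_s} : X → X (1 ≤ s ≤ N) is bijective; D is group-like, i.e. Δ(D) = D ⊗ D; and r also satisfies (CQT3) Σ r(x_(1), y_(1)) x_(2) y_(2) = Σ y_(1) x_(1) r(x_(2), y_(2)) for all x, y ∈ A. For a, b ∈ X define a_0 := a, a_s := f_{j_s}(a_{s−1}) for 1 ≤ s ≤ N, and define b_N := b, b_{s−1} := f_{j_s}^{−1}(b_s) for 1 ≤ s ≤ N. Then α(g_{a_0}(j_1), g_{a_1}(j_2), …, g_{a_{N−1}}(j_N)) · D · t_{a_N, b} = α(g_{b_0}(j_1), g_{b_1}(j_2), …, g_{b_{N−1}}(j_N)) · t_{a, b_0} · D. -/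
open scoped TensorProduct

/-!
Pairing the quantum determinant with a generator is computed one factor at a time by (CQT1):
`r(t_{j i}, t_{x c})` forces `i = g_x(j)` and moves `x` to `f_j(x)`, so `r(D, t_{x c})` vanishes
unless `c` is the end `x_N` of the trajectory of `x`, where it equals `q^N α(g_{x_0}(j_1), …)`.
Applying (CQT3) to the group-like `D` and `t_{a b}` gives
`∑ₘ r(D, t_{a m}) D t_{m b} = ∑ₘ r(D, t_{m b}) t_{a m} D`; on the left only `m = a_N` survives,
and on the right, since the `f_{j_s}` are injective, only the unique `m = b_0` whose trajectory
ends at `b`. Cancelling `q^N ≠ 0` gives the claim.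
-/

def IsTrajectory {X : Type*} {M : ℕ} (F : Fin M → X → X) (x : ℕ → X) : Prop :=
  ∀ s : Fin M, x (s.1 + 1) = F s (x s.1)

namespace IsTrajectory

variable {X : Type*} {M : ℕ} {F : Fin M → X → X} {x y : ℕ → X}

theorem tail {F : Fin (M + 1) → X → X} (hx : IsTrajectory F x) :
    IsTrajectory (fun s => F s.succ) (fun m => x (m + 1)) :=
  fun s => hx s.succ

theorem eq_of_apply_zero_eq (hx : IsTrajectory F x) (hy : IsTrajectory F y) (h₀ : x 0 = y 0) :
    ∀ s ≤ M, x s = y s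
  | 0, _ => h₀
  | s + 1, hs => by
    rw [hx ⟨s, hs⟩, hy ⟨s, hs⟩, eq_of_apply_zero_eq hx hy h₀ s (by omega)]

theorem apply_zero_eq_of_apply_eq (hF : ∀ s, Function.Injective (F s)) (hx : IsTrajectory F x)
    (hy : IsTrajectory F y) (hM : x M = y M) : x 0 = y 0 := by
  suffices ∀ s ≤ M, x s = y s → x 0 = y 0 from this M le_rfl hM
  intro s
  induction s with
  | zero => exact fun _ h => h
  | succ s ih =>
    intro hs h
    rw [hx ⟨s, hs⟩, hy ⟨s, hs⟩] at h
    exact ih (by omega) (hF _ h)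

end IsTrajectory

section Pairing

variable {k : Type*} [CommSemiring k] {A : Type*} [Semiring A] [Module k A] {n : ℕ}
  {g f : Fin n → Fin n → Fin n} {q : Fin n → Fin n → k} {t : Fin n → Fin n → A}
  {r : A →ₗ[k] A →ₗ[k] k}

/- At least one factor: (CQT1) alone does not determine `r 1`. -/
theorem pairing_prod_generator
    (hmul : ∀ a b x c, r (a * b) (t x c) = ∑ m, r a (t x m) * r b (t m c))
    (hrt : ∀ i c j l, r (t i c) (t j l) = if c = g j i ∧ l = f i j then q j i else 0)
    {M : ℕ} (js is : Fin (M + 1) → Fin n) {x : ℕ → Fin n}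
    (hx : IsTrajectory (fun s => f (js s)) x) (c : Fin n) :
    r (List.ofFn fun s => t (js s) (is s)).prod (t (x 0) c) =
      if (∀ s : Fin (M + 1), is s = g (x s) (js s)) ∧ c = x (M + 1) then
        ∏ s : Fin (M + 1), q (x s) (js s) else 0 := by
  induction M generalizing x with
  | zero =>
    have h₁ : x 1 = f (js 0) (x 0) := hx 0
    simp [hrt, h₁, Fin.forall_fin_one]
  | succ M ih =>
    rw [List.ofFn_succ, List.prod_cons, hmul]
    simp only [hrt, ite_mul, zero_mul, and_comm (b := _ = f _ _), ite_and]
    have htail := ih (fun s => js s.succ) (fun s => is s.succ) hx.tail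
    have h₁ : f (js 0) (x 0) = x (0 + 1) := (hx 0).symm
    rw [Finset.sum_ite_eq' Finset.univ, if_pos (Finset.mem_univ _), h₁, htail]
    simp only [Fin.forall_fin_succ (n := M + 1), Fin.prod_univ_succ (n := M + 1), Fin.val_succ,
      Fin.val_zero, mul_ite, mul_zero, ite_and]

theorem pairing_sum_smul_prod_generator
    (hmul : ∀ a b x c, r (a * b) (t x c) = ∑ m, r a (t x m) * r b (t m c))
    (hrt : ∀ i c j l, r (t i c) (t j l) = if c = g j i ∧ l = f i j then q j i else 0)
    {M : ℕ} (α : (Fin (M + 1) → Fin n) → k) (js : Fin (M + 1) → Fin n) {x : ℕ → Fin n}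
    (hx : IsTrajectory (fun s => f (js s)) x) (c : Fin n) :
    r (∑ is, α is • (List.ofFn fun s => t (js s) (is s)).prod) (t (x 0) c) =
      if c = x (M + 1) then
        (∏ s : Fin (M + 1), q (x s) (js s)) * α (fun s : Fin (M + 1) => g (x s) (js s))
      else 0 := by
  rw [map_sum, LinearMap.sum_apply, Finset.sum_eq_single (fun s : Fin (M + 1) => g (x s) (js s))]
  · simp only [map_smul, LinearMap.smul_apply, pairing_prod_generator hmul hrt _ _ hx]
    simp [mul_comm]
  · intro is _ his
    simp only [map_smul, LinearMap.smul_apply, pairing_prod_generator hmul hrt _ _ hx]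
    rw [if_neg fun h => his (funext h.1), smul_zero]
  · simp

end Pairing

section Bialgebra

variable {k : Type*} [CommSemiring k] {A : Type*} [Semiring A] [Bialgebra k A] {n : ℕ}
  {t : Fin n → Fin n → A} {r : A →ₗ[k] A →ₗ[k] k}

def generatorRepr
    (hcomul : ∀ i j, Coalgebra.comul (R := k) (t i j) = ∑ m, t i m ⊗ₜ[k] t m j) (i j : Fin n) : Coalgebra.Repr k (t i j) (ULift (Fin n)) where
  index := Finset.univ
  left m := t i m.down
  right m := t m.down j
  eq := by rw [hcomul]; exact Fintype.sum_equiv Equiv.ulift _ _ fun _ => rfl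

theorem pairing_mul_generator
    (hcomul : ∀ i j, Coalgebra.comul (R := k) (t i j) = ∑ m, t i m ⊗ₜ[k] t m j)
    (hCQT1 : ∀ (a b c : A) {ι : Type*} (rc : Coalgebra.Repr k c ι),
      r (a * b) c = ∑ i ∈ rc.index, r a (rc.left i) * r b (rc.right i))
    (a b : A) (x c : Fin n) :
    r (a * b) (t x c) = ∑ m, r a (t x m) * r b (t m c) := by
  rw [hCQT1 a b _ (generatorRepr hcomul x c)]
  exact Fintype.sum_equiv Equiv.ulift _ _ fun _ => rfl

theorem sum_pairing_smul_mul_comm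
    (hcomul : ∀ i j, Coalgebra.comul (R := k) (t i j) = ∑ m, t i m ⊗ₜ[k] t m j)
    (hCQT3 : ∀ (x y : A) {ι₁ ι₂ : Type*} (rx : Coalgebra.Repr k x ι₁) (ry : Coalgebra.Repr k y ι₂),
      ∑ i ∈ rx.index, ∑ j ∈ ry.index,
          r (rx.left i) (ry.left j) • (rx.right i * ry.right j) =
        ∑ i ∈ rx.index, ∑ j ∈ ry.index,
          r (rx.right i) (ry.right j) • (ry.left j * rx.left i))
    {D : A} (hD : Coalgebra.comul (R := k) D = D ⊗ₜ[k] D) (a b : Fin n) :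
    ∑ m, r D (t a m) • (D * t m b) = ∑ m, r D (t m b) • (t a m * D) := by
  have h := hCQT3 D (t a b) ⟨Finset.univ, fun _ : PUnit => D, fun _ => D, by simp [hD]⟩
    (generatorRepr hcomul a b)
  simp only [Finset.univ_unique, Finset.sum_singleton] at h
  convert h using 1 <;> exact Fintype.sum_equiv Equiv.ulift.symm _ _ fun _ => rfl

end Bialgebra

/-- Commutation of the quantum determinant with the generators, for a constant
cocycle.  In the setting of the previous proposition, assume moreover that the
cocycle is constant (`q i j = q₀`), each `f_{j_s}` is bijective, `D` is group-like,
and `r` also satisfies (CQT3).  With `a₀ := a`, `a_s := f_{j_s}(a_{s-1})` and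
`b_N := b`, `b_{s-1} := f_{j_s}⁻¹(b_s)`, one has
`α(g_{a₀}(j₁),…,g_{a_{N-1}}(j_N)) • (D * t_{a_N, b})
  = α(g_{b₀}(j₁),…,g_{b_{N-1}}(j_N)) • (t_{a, b₀} * D)`. -/
theorem quantum_determinant_commutation_set_theoretical
    {k : Type*} [Field k] {A : Type*} [Ring A] [Bialgebra k A]
    (n : ℕ) (g f : Fin n → Fin n → Fin n)
    (q : Fin n → Fin n → k) (hq : ∀ i j, q i j ≠ 0)
    (q₀ : k) (hconst : ∀ i j, q i j = q₀)
    (t : Fin n → Fin n → A)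
    (hcomul : ∀ i j, Coalgebra.comul (R := k) (t i j) = ∑ m, t i m ⊗ₜ[k] t m j)
    (r : A →ₗ[k] A →ₗ[k] k)
    (hCQT1 : ∀ (a b c : A) {ι : Type*} (rc : Coalgebra.Repr k c ι),
      r (a * b) c = ∑ i ∈ rc.index, r a (rc.left i) * r b (rc.right i))
    (hCQT3 : ∀ (x y : A) {ι₁ ι₂ : Type*} (rx : Coalgebra.Repr k x ι₁) (ry : Coalgebra.Repr k y ι₂),
      ∑ i ∈ rx.index, ∑ j ∈ ry.index,
          r (rx.left i) (ry.left j) • (rx.right i * ry.right j) =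
        ∑ i ∈ rx.index, ∑ j ∈ ry.index,
          r (rx.right i) (ry.right j) • (ry.left j * rx.left i))
    (hrt : ∀ i c j l, r (t i c) (t j l) =
      if c = g j i ∧ l = f i j then q j i else 0)
    (N : ℕ) (hN : 1 ≤ N) (jseq : Fin N → Fin n)
    (hfbij : ∀ s : Fin N, Function.Bijective (f (jseq s)))
    (α : (Fin N → Fin n) → k) (D : A)
    (hD : D = ∑ iseq : Fin N → Fin n,
      α iseq • (List.ofFn fun s => t (jseq s) (iseq s)).prod)
    (hDgrouplike : Coalgebra.comul (R := k) D = D ⊗ₜ[k] D)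
    (aseq : Fin n → ℕ → Fin n)
    (ha0 : ∀ a, aseq a 0 = a)
    (haS : ∀ (a : Fin n) (s : Fin N), aseq a (s.1 + 1) = f (jseq s) (aseq a s.1))
    (bseq : Fin n → ℕ → Fin n)
    (hbN : ∀ b, bseq b N = b)
    (hbS : ∀ (b : Fin n) (s : Fin N), f (jseq s) (bseq b s.1) = bseq b (s.1 + 1)) :
    ∀ a b : Fin n,
      α (fun s => g (aseq a s.1) (jseq s)) • (D * t (aseq a N) b) =
        α (fun s => g (bseq b s.1) (jseq s)) • (t a (bseq b 0) * D) := by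
  intro a b
  obtain ⟨M, rfl⟩ := Nat.exists_eq_add_of_le' hN
  have haTraj : ∀ x, IsTrajectory (fun s => f (jseq s)) (aseq x) := haS
  have hbTraj : IsTrajectory (fun s => f (jseq s)) (bseq b) := fun s => (hbS b s).symm
  have hrD : ∀ x c, r D (t x c) = if c = aseq x (M + 1) then
      q₀ ^ (M + 1) * α (fun s => g (aseq x s) (jseq s)) else 0 := fun x c => by
    simpa only [ha0, hD, hconst, Finset.prod_const, Finset.card_univ, Fintype.card_fin] using
      pairing_sum_smul_prod_generator (pairing_mul_generator hcomul hCQT1) hrt α jseq (haTraj x) c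
  have hagree : ∀ s ≤ M + 1, aseq (bseq b 0) s = bseq b s :=
    (haTraj _).eq_of_apply_zero_eq hbTraj (ha0 _)
  have hend_iff : ∀ m, b = aseq m (M + 1) ↔ m = bseq b 0 := fun m => by
    refine ⟨fun h => ?_, fun h => by rw [h, hagree _ le_rfl, hbN]⟩
    have hends : aseq m (M + 1) = bseq b (M + 1) := by rw [hbN, h]
    simpa only [ha0] using
      (haTraj m).apply_zero_eq_of_apply_eq (fun s => (hfbij s).injective) hbTraj hends
  have hL : ∑ m, r D (t a m) • (D * t m b) =
      (q₀ ^ (M + 1) * α (fun s => g (aseq a s) (jseq s))) • (D * t (aseq a (M + 1)) b) := by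
    rw [Fintype.sum_eq_single (aseq a (M + 1)) fun m hm => by rw [hrD, if_neg hm, zero_smul],
      hrD, if_pos rfl]
  have hR : ∑ m, r D (t m b) • (t a m * D) =
      (q₀ ^ (M + 1) * α (fun s => g (bseq b s) (jseq s))) • (t a (bseq b 0) * D) := by
    rw [Fintype.sum_eq_single (bseq b 0)
      fun m hm => by rw [hrD, if_neg (mt (hend_iff m).1 hm), zero_smul],
      hrD, if_pos ((hend_iff _).2 rfl)]
    simp only [fun s : Fin (M + 1) => hagree s s.2.le]
  have hcomm := sum_pairing_smul_mul_comm hcomul hCQT3 hDgrouplike a b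
  rw [hL, hR, mul_smul, mul_smul] at hcomm
  have hq₀ : q₀ ≠ 0 := hconst a a ▸ hq a a
  exact smul_right_injective A (pow_ne_zero _ hq₀) hcomm
end

section
/- Let k be a field, A an associative unital k-algebra, n ≥ 1, and let q_{ij} ∈ k^× (1 ≤ i, j ≤ n) satisfy q_{ij} q_{ji} = 1 whenever i ≠ j. Let t_{ij} ∈ A (1 ≤ i, j ≤ n) satisfy the FRT relations of a diagonal braiding: q_{kℓ} t_{ik} t_{jℓ} = q_{ij} t_{jℓ} t_{ik} for all 1 ≤ i, j, k, ℓ ≤ n. If i ≠ j and q_{jj}^{−2} q_{ii}^{2} ≠ 1 (equivalently q_{ii}^2 ≠ q_{jj}^2), then (t_{ij})^2 = 0. -/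
/-- For a diagonal braiding with `q i j * q j i = 1` for `i ≠ j`, the FRT relations
`q_{kℓ} t_{ik} t_{jℓ} = q_{ij} t_{jℓ} t_{ik}` imply that `(t i j)² = 0` whenever
`i ≠ j` and `q_{jj}⁻² q_{ii}² ≠ 1`. -/
theorem offdiagonal_square_zero_of_FRT_diagonal
    {k : Type*} [Field k] {A : Type*} [Ring A] [Algebra k A]
    (n : ℕ) (q : Fin n → Fin n → k) (hq : ∀ i j, q i j ≠ 0)
    (hqq : ∀ i j, i ≠ j → q i j * q j i = 1)
    (t : Fin n → Fin n → A)
    (hFRT : ∀ i j a b, q a b • (t i a * t j b) = q i j • (t j b * t i a)) :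
    ∀ i j, i ≠ j → (q j j)⁻¹ ^ 2 * q i i ^ 2 ≠ 1 → t i j ^ 2 = 0 := by
  intro i j hij h
  have hne : q i i ≠ q j j := by
    intro he
    apply h
    rw [he, inv_pow]
    exact inv_mul_cancel₀ (pow_ne_zero 2 (hq j j))
  have h1 := hFRT i i j j
  have h2 : (q j j - q i i) • (t i j * t i j) = 0 := by
    rw [sub_smul, h1, sub_self]
  have h3 : t i j * t i j = 0 :=
    (smul_eq_zero.mp h2).resolve_left (sub_ne_zero_of_ne hne.symm)
  rw [sq]; exact h3
end

section
/- Let k be a field, A a bialgebra over k, n ≥ 1, and let q_{ij} ∈ k^× (1 ≤ i, j ≤ n) satisfy: q_{ij} q_{ji} = 1 for all i ≠ j; q_{ii}^2 ≠ 1 for all i; and q_{ii}^2 ≠ q_{jj}^2 for all i ≠ j. Let t_{ij} ∈ A satisfy Δ(t_{ij}) = Σ_{k=1}^n t_{ik} ⊗ t_{kj}, ε(t_{ij}) = δ_{ij}, and the FRT relations q_{kℓ} t_{ik} t_{jℓ} = q_{ij} t_{jℓ} t_{ik} for all i, j, k, ℓ. Let m_1, …, m_n be integers with m_i ≥ 2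 for all i (in the paper, m_i = N_i − 1 where q_{ii} is a primitive N_i-th root of unity with N_i ≥ 3). Then the element D := (t_{11})^{m_1} (t_{22})^{m_2} ⋯ (t_{nn})^{m_n} is group-like: Δ(D) = D ⊗ D and ε(D) = 1. -/
/-!
The FRT relations for `(i, i, a, b)` and `(i, i, b, a)` combine to
`(q b a * q a b) • (t i a * t i b) = q i i ^ 2 • (t i a * t i b)`, and the hypotheses on `q` make
the two scalars differ unless `a = b = i`; so `t i a * t i b = 0` except for `a = b = i`. Hence in
`Δ(t i i) ^ m = (∑ a, t i a ⊗ t a i) ^ m` every cross term dies once `m ≥ 2`, leaving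
`t i i ^ m ⊗ t i i ^ m`. Each `t i i ^ m i` is therefore group-like, and so is their product.
-/

open scoped TensorProduct

open Coalgebra

theorem Fintype.sum_pow_eq_pow_of_mul_eq_zero {R ι : Type*} [Semiring R] [Fintype ι]
    (x : ι → R) (i : ι) (h : ∀ a b, ¬(a = i ∧ b = i) → x a * x b = 0) {m : ℕ} (hm : 2 ≤ m) :
    (∑ a, x a) ^ m = x i ^ m := by
  have hmul_right : (∑ a, x a) * x i = x i * x i := by
    rw [Finset.sum_mul, Fintype.sum_eq_single i fun a ha => h a i (by simp [ha])]
  have hsq : (∑ a, x a) ^ 2 = x i ^ 2 := by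
    rw [sq, Finset.mul_sum, Fintype.sum_eq_single i, hmul_right, sq]
    intro b hb
    rw [Finset.sum_mul]
    exact Finset.sum_eq_zero fun a _ => h a b (by simp [hb])
  obtain ⟨m, rfl⟩ := Nat.exists_eq_add_of_le' hm
  clear hm
  induction m with
  | zero => exact hsq
  | succ m ih =>
    calc (∑ a, x a) ^ (m + 1 + 2) = (∑ a, x a) * x i ^ (m + 2) := by rw [← ih, ← pow_succ']
      _ = (∑ a, x a) * x i * x i ^ (m + 1) := by rw [mul_assoc, ← pow_succ']
      _ = x i ^ (m + 1 + 2) := by rw [hmul_right, mul_assoc, ← pow_succ', ← pow_succ']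

theorem row_mul_eq_zero_of_frt {k A ι : Type*} [Field k] [Ring A] [Module k A]
    (q : ι → ι → k) (t : ι → ι → A)
    (hFRT : ∀ i j a b, q a b • (t i a * t j b) = q i j • (t j b * t i a))
    {i a b : ι} (hq : q b a * q a b ≠ q i i ^ 2) :
    t i a * t i b = 0 := by
  have hswap : (q b a * q a b) • (t i a * t i b) = q i i ^ 2 • (t i a * t i b) := by
    rw [mul_smul, hFRT, smul_comm, hFRT, smul_smul, sq]
  rw [← sub_eq_zero, ← sub_smul] at hswap
  exact (smul_eq_zero.mp hswap).resolve_left (sub_ne_zero.mpr hq)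

theorem isGroupLikeElem_pow_of_row_mul_eq_zero {R A ι : Type*} [CommSemiring R] [Semiring A]
    [Bialgebra R A] [Fintype ι] (t : ι → ι → A) (i : ι)
    (hcomul : comul (R := R) (t i i) = ∑ a, t i a ⊗ₜ[R] t a i)
    (hcounit : counit (R := R) (t i i) = 1)
    (hrow : ∀ a b, ¬(a = i ∧ b = i) → t i a * t i b = 0) {m : ℕ} (hm : 2 ≤ m) :
    IsGroupLikeElem R (t i i ^ m) where
  counit_eq_one := by rw [Bialgebra.counit_pow, hcounit, one_pow]
  comul_eq_tmul_self := by
    rw [Bialgebra.comul_pow, hcomul, ← Algebra.TensorProduct.tmul_pow]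
    refine Fintype.sum_pow_eq_pow_of_mul_eq_zero _ i (fun a b hab => ?_) hm
    rw [Algebra.TensorProduct.tmul_mul_tmul, hrow a b hab, TensorProduct.zero_tmul]

theorem quantum_determinant_quantum_linear_space_grouplike_general
    {k : Type*} [Field k] {A : Type*} [Ring A] [Bialgebra k A]
    (n : ℕ) (q : Fin n → Fin n → k)
    (hqq : ∀ i j, i ≠ j → q i j * q j i = 1)
    (hqii : ∀ i, q i i ^ 2 ≠ 1)
    (hqij : ∀ i j, i ≠ j → q i i ^ 2 ≠ q j j ^ 2)
    (t : Fin n → Fin n → A)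
    (hcomul : ∀ i j, Coalgebra.comul (R := k) (t i j) = ∑ m, t i m ⊗ₜ[k] t m j)
    (hcounit : ∀ i j, Coalgebra.counit (R := k) (t i j) = if i = j then (1 : k) else 0)
    (hFRT : ∀ i j a b, q a b • (t i a * t j b) = q i j • (t j b * t i a))
    (m : Fin n → ℕ) (hm : ∀ i, 2 ≤ m i)
    (D : A) (hD : D = (List.ofFn fun i => t i i ^ m i).prod) :
    Coalgebra.comul (R := k) D = D ⊗ₜ[k] D ∧ Coalgebra.counit (R := k) D = 1 := by
  have hrow : ∀ i a b, ¬(a = i ∧ b = i) → t i a * t i b = 0 := by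
    intro i a b hab
    refine row_mul_eq_zero_of_frt q t hFRT ?_
    rcases eq_or_ne a b with rfl | hab'
    · exact (sq (q a a)).symm.trans_ne (hqij a i fun h => hab ⟨h, h⟩)
    · rw [hqq b a hab'.symm]
      exact (hqii i).symm
  have hpow : ∀ i, IsGroupLikeElem k (t i i ^ m i) := fun i =>
    isGroupLikeElem_pow_of_row_mul_eq_zero t i (hcomul i i) (by simp [hcounit]) (hrow i) (hm i)
  have hDgrp : IsGroupLikeElem k D :=
    hD ▸ (groupLikeSubmonoid k A).list_prod_mem (List.forall_mem_ofFn_iff.mpr hpow)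
  exact ⟨hDgrp.comul_eq_tmul_self, hDgrp.counit_eq_one⟩

/-- **Quantum determinant of a quantum linear space is group-like.**
In a bialgebra `A` over a field `k`, let `t i j` be comatrix elements satisfying the
FRT relations of a diagonal braiding with `q i j * q j i = 1` (`i ≠ j`),
`q i i ² ≠ 1`, and `q i i ² ≠ q j j ²` for `i ≠ j`.  Then for any exponents
`m i ≥ 2`, the element `D = (t 0 0)^{m 0} ⋯ (t (n-1) (n-1))^{m (n-1)}` is
group-like: `Δ(D) = D ⊗ D` and `ε(D) = 1`. -/
theorem quantum_determinant_quantum_linear_space_grouplike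
    {k : Type*} [Field k] {A : Type*} [Ring A] [Bialgebra k A]
    (n : ℕ) (hn : 1 ≤ n) (q : Fin n → Fin n → k) (hq : ∀ i j, q i j ≠ 0)
    (hqq : ∀ i j, i ≠ j → q i j * q j i = 1)
    (hqii : ∀ i, q i i ^ 2 ≠ 1)
    (hqij : ∀ i j, i ≠ j → q i i ^ 2 ≠ q j j ^ 2)
    (t : Fin n → Fin n → A)
    (hcomul : ∀ i j, Coalgebra.comul (R := k) (t i j) = ∑ m, t i m ⊗ₜ[k] t m j)
    (hcounit : ∀ i j, Coalgebra.counit (R := k) (t i j) = if i = j then (1 : k) else 0)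
    (hFRT : ∀ i j a b, q a b • (t i a * t j b) = q i j • (t j b * t i a))
    (m : Fin n → ℕ) (hm : ∀ i, 2 ≤ m i)
    (D : A) (hD : D = (List.ofFn fun i => t i i ^ m i).prod) :
    Coalgebra.comul (R := k) D = D ⊗ₜ[k] D ∧ Coalgebra.counit (R := k) D = 1 :=
  quantum_determinant_quantum_linear_space_grouplike_general n q hqq hqii hqij t hcomul hcounit hFRT
    m hm D hD
end

section
/- Let k be a field and A a bialgebra over k endowed with an algebra grading A = ⊕_{m∈ℕ} A^m by k-subspaces (so the sum is direct, 1 ∈ A^0, and A^m · A^{m'} ⊆ A^{m+m'} for all m, m'), such that A^0 is one-dimensional, spanned by 1. Suppose n ≥ 1 and there exist elements t_{ij} ∈ A^1 (1 ≤ i, j ≤ n) with Δ(t_{ij}) = Σ_{k=1}^n t_{ik} ⊗ t_{kj} and ε(t_{ij}) = δ_{ij}. Then A admits no antipode: there is no k-linear map S : A → A satisfying Σ a_(1) S(a_(2)) = ε(a) 1 for all a ∈ A. In particular, A is not a Hopf algebra. -/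
open scoped TensorProduct

/-! The antipode identity at a diagonal comatrix element reads `1 = ∑ₘ t i m * S (t m i)`.
Projection onto degree `0` is a ring homomorphism for an `ℕ`-grading; it fixes `1` and kills
every `t i m`, which has degree `1`. Hence `1 = 0`, impossible in a bialgebra over a field. -/

open DirectSum

noncomputable abbrev GradedRing.ofIsInternal {ι A σ : Type*} [DecidableEq ι] [AddMonoid ι]
    [Semiring A] [SetLike σ A] [AddSubmonoidClass σ A] {𝒜 : ι → σ} (h : IsInternal 𝒜)
    (one_mem : (1 : A) ∈ 𝒜 0) (mul_mem : ∀ i j, ∀ a ∈ 𝒜 i, ∀ b ∈ 𝒜 j, a * b ∈ 𝒜 (i + j)) :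
    GradedRing 𝒜 :=
  { h.chooseDecomposition with
    one_mem := one_mem
    mul_mem := fun _ _ _ _ ha hb => mul_mem _ _ _ ha _ hb }

theorem GradedRing.sum_mul_ne_one {ι A σ β : Type*} [DecidableEq ι] [AddCommMonoid ι]
    [PartialOrder ι] [CanonicallyOrderedAdd ι] [Semiring A] [Nontrivial A] [SetLike σ A]
    [AddSubmonoidClass σ A] (𝒜 : ι → σ) [GradedRing 𝒜] {s : Finset β} {a b : β → A} {i : ι}
    (ha : ∀ m ∈ s, a m ∈ 𝒜 i) (hi : i ≠ 0) : ∑ m ∈ s, a m * b m ≠ 1 := by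
  intro h
  have hproj := congrArg (GradedRing.projZeroRingHom 𝒜) h
  rw [map_one, map_sum, Finset.sum_eq_zero] at hproj
  · exact zero_ne_one hproj
  intro m hm
  rw [map_mul, GradedRing.projZeroRingHom_apply, decompose_of_mem_ne 𝒜 (ha m hm) hi, zero_mul]

theorem Bialgebra.sum_comatrix_mul_map_eq_ite {k A : Type*} [CommSemiring k] [Semiring A]
    [Bialgebra k A] {n : ℕ} {t : Fin n → Fin n → A}
    (hcomul : ∀ i j, Coalgebra.comul (R := k) (t i j) = ∑ m, t i m ⊗ₜ[k] t m j)
    (hcounit : ∀ i j, Coalgebra.counit (R := k) (t i j) = if i = j then (1 : k) else 0)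
    {S : A →ₗ[k] A}
    (hS : LinearMap.mul' k A ∘ₗ S.lTensor A ∘ₗ Coalgebra.comul (R := k) =
      Algebra.linearMap k A ∘ₗ Coalgebra.counit (R := k)) (i j : Fin n) :
    ∑ m, t i m * S (t m j) = if i = j then 1 else 0 := by
  have h := LinearMap.congr_fun hS (t i j)
  simp only [LinearMap.comp_apply, hcomul, hcounit, map_sum, LinearMap.lTensor_tmul,
    LinearMap.mul'_apply, Algebra.linearMap_apply] at h
  rw [h]
  split_ifs <;> simp

/-- **A graded bialgebra with comatrix generators in degree 1 admits no antipode.**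
Let `A` be a bialgebra over a field `k` with an algebra grading `A = ⊕ₘ A^m` such
that `A^0 = k·1`, and suppose there are comatrix elements `t i j ∈ A^1`
(`n ≥ 1`).  Then there is no `k`-linear map `S : A → A` with
`∑ a₍₁₎ S(a₍₂₎) = ε(a) 1` for all `a`; in particular `A` is not a Hopf algebra. -/
theorem no_antipode_of_graded_comatrix
    {k : Type*} [Field k] {A : Type*} [Ring A] [Bialgebra k A]
    (𝒜 : ℕ → Submodule k A)
    (hdirect : DirectSum.IsInternal 𝒜)
    (hone : 𝒜 0 = Submodule.span k {(1 : A)})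
    (hmul : ∀ (m m' : ℕ), ∀ a ∈ 𝒜 m, ∀ b ∈ 𝒜 m', a * b ∈ 𝒜 (m + m'))
    (n : ℕ) (hn : 1 ≤ n) (t : Fin n → Fin n → A)
    (ht1 : ∀ i j, t i j ∈ 𝒜 1)
    (hcomul : ∀ i j, Coalgebra.comul (R := k) (t i j) = ∑ m, t i m ⊗ₜ[k] t m j)
    (hcounit : ∀ i j, Coalgebra.counit (R := k) (t i j) = if i = j then (1 : k) else 0) :
    ¬ ∃ S : A →ₗ[k] A,
      LinearMap.mul' k A ∘ₗ S.lTensor A ∘ₗ Coalgebra.comul (R := k) =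
        Algebra.linearMap k A ∘ₗ Coalgebra.counit (R := k) := by
  rintro ⟨S, hS⟩
  let _ := GradedRing.ofIsInternal hdirect (hone ▸ Submodule.mem_span_singleton_self 1) hmul
  have := Bialgebra.nontrivial k (A := A)
  let i : Fin n := ⟨0, hn⟩
  have h := Bialgebra.sum_comatrix_mul_map_eq_ite hcomul hcounit hS i i
  rw [if_pos rfl] at h
  exact GradedRing.sum_mul_ne_one 𝒜 (fun m _ => ht1 i m) one_ne_zero h
end

section
/- Let k be a field and let A be the quotient of the free (noncommutative) k-algebra k⟨a, b, c, d⟩ by the two-sided ideal generated by the elements a² − d², ab − cd, ba − dc, ac − bd, ca − db, and b² − c². Then the element D := a² − b² is central in A; in particular, D commutes with (the images of) a, b, c and d. -/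
/-- The defining relations of the FRT bialgebra of the `2 × 2` non-diagonal
involutive example: with generators `a = X 0`, `b = X 1`, `c = X 2`, `d = X 3`,
the relations are `a² = d²`, `ab = cd`, `ba = dc`, `ac = bd`, `ca = db`,
`b² = c²`. -/
inductive FRTrel2x2 (k : Type*) [Field k] :
    FreeAlgebra k (Fin 4) → FreeAlgebra k (Fin 4) → Prop
  | sq : FRTrel2x2 k (FreeAlgebra.ι k 0 * FreeAlgebra.ι k 0)
      (FreeAlgebra.ι k 3 * FreeAlgebra.ι k 3)
  | ab : FRTrel2x2 k (FreeAlgebra.ι k 0 * FreeAlgebra.ι k 1)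
      (FreeAlgebra.ι k 2 * FreeAlgebra.ι k 3)
  | ba : FRTrel2x2 k (FreeAlgebra.ι k 1 * FreeAlgebra.ι k 0)
      (FreeAlgebra.ι k 3 * FreeAlgebra.ι k 2)
  | ac : FRTrel2x2 k (FreeAlgebra.ι k 0 * FreeAlgebra.ι k 2)
      (FreeAlgebra.ι k 1 * FreeAlgebra.ι k 3)
  | ca : FRTrel2x2 k (FreeAlgebra.ι k 2 * FreeAlgebra.ι k 0)
      (FreeAlgebra.ι k 3 * FreeAlgebra.ι k 1)
  | bb : FRTrel2x2 k (FreeAlgebra.ι k 1 * FreeAlgebra.ι k 1)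
      (FreeAlgebra.ι k 2 * FreeAlgebra.ι k 2)

/-- The images of the four generators `a, b, c, d` in the quotient algebra. -/
noncomputable def FRTgen2x2 (k : Type*) [Field k] (i : Fin 4) :
    RingQuot (FRTrel2x2 k) :=
  RingQuot.mkAlgHom k (FRTrel2x2 k) (FreeAlgebra.ι k i)

lemma FRTgen2x2_rel (k : Type*) [Field k] {x y : FreeAlgebra k (Fin 4)}
    (h : FRTrel2x2 k x y) :
    RingQuot.mkAlgHom k (FRTrel2x2 k) x = RingQuot.mkAlgHom k (FRTrel2x2 k) y :=
  RingQuot.mkAlgHom_rel k h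

lemma FRT_D_comm_gen (k : Type*) [Field k] (i : Fin 4) :
    (FRTgen2x2 k 0 ^ 2 - FRTgen2x2 k 1 ^ 2) * FRTgen2x2 k i =
      FRTgen2x2 k i * (FRTgen2x2 k 0 ^ 2 - FRTgen2x2 k 1 ^ 2) := by
  have hsq := FRTgen2x2_rel k FRTrel2x2.sq
  have hab := FRTgen2x2_rel k FRTrel2x2.ab
  have hba := FRTgen2x2_rel k FRTrel2x2.ba
  have hac := FRTgen2x2_rel k FRTrel2x2.ac
  have hca := FRTgen2x2_rel k FRTrel2x2.ca
  have hbb := FRTgen2x2_rel k FRTrel2x2.bb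
  simp only [map_mul] at hsq hab hba hac hca hbb
  set a := FRTgen2x2 k 0 with ha'
  set b := FRTgen2x2 k 1 with hb'
  set c := FRTgen2x2 k 2 with hc'
  set d := FRTgen2x2 k 3 with hd'
  change a * a = d * d at hsq
  change a * b = c * d at hab
  change b * a = d * c at hba
  change a * c = b * d at hac
  change c * a = d * b at hca
  change b * b = c * c at hbb
  have Key : ∀ x : RingQuot (FRTrel2x2 k), a * a * x = x * (a * a) →
      b * b * x = x * (b * b) → (a ^ 2 - b ^ 2) * x = x * (a ^ 2 - b ^ 2) := by
    intro x h1 h2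
    rw [sq, sq, sub_mul, mul_sub, h1, h2]
  have h1a : a * a * a = a * (a * a) := mul_assoc a a a
  have h2a : b * b * a = a * (b * b) := by
    have : a * (b * b) = b * b * a := by
      calc a * (b * b) = a * b * b := (mul_assoc a b b).symm
        _ = c * d * b := by rw [hab]
        _ = c * (d * b) := mul_assoc c d b
        _ = c * (c * a) := by rw [hca]
        _ = c * c * a := (mul_assoc c c a).symm
        _ = b * b * a := by rw [hbb]
    exact this.symm
  have h1b : a * a * b = b * (a * a) := by
    calc a * a * b = a * (a * b) := mul_assoc a a b
      _ = a * (c * d) := by rw [hab]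
      _ = a * c * d := (mul_assoc a c d).symm
      _ = b * d * d := by rw [hac]
      _ = b * (d * d) := mul_assoc b d d
      _ = b * (a * a) := by rw [hsq]
  have h2b : b * b * b = b * (b * b) := mul_assoc b b b
  have h1c : a * a * c = c * (a * a) := by
    calc a * a * c = a * (a * c) := mul_assoc a a c
      _ = a * (b * d) := by rw [hac]
      _ = a * b * d := (mul_assoc a b d).symm
      _ = c * d * d := by rw [hab]
      _ = c * (d * d) := mul_assoc c d d
      _ = c * (a * a) := by rw [hsq]
  have h2c : b * b * c = c * (b * b) := by rw [hbb, mul_assoc, ← hbb]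
  have h1d : a * a * d = d * (a * a) := by rw [hsq, mul_assoc, ← hsq]
  have h2d : b * b * d = d * (b * b) := by
    calc b * b * d = b * (b * d) := mul_assoc b b d
      _ = b * (a * c) := by rw [hac]
      _ = b * a * c := (mul_assoc b a c).symm
      _ = d * c * c := by rw [hba]
      _ = d * (c * c) := mul_assoc d c c
      _ = d * (b * b) := by rw [hbb]
  fin_cases i
  · exact Key a h1a h2a
  · exact Key b h1b h2b
  · exact Key c h1c h2c
  · exact Key d h1d h2d

/-- **The quantum determinant `D = a² − b²` of the `2 × 2` non-diagonal involutive
example is central** in the quotient of the free algebra `k⟨a,b,c,d⟩` by the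
two-sided ideal generated by `a² − d²`, `ab − cd`, `ba − dc`, `ac − bd`,
`ca − db`, `b² − c²`. -/
theorem quantum_determinant_central_2x2 (k : Type*) [Field k] :
    ∀ x : RingQuot (FRTrel2x2 k),
      (FRTgen2x2 k 0 ^ 2 - FRTgen2x2 k 1 ^ 2) * x =
        x * (FRTgen2x2 k 0 ^ 2 - FRTgen2x2 k 1 ^ 2) := by
  intro x
  obtain ⟨y, rfl⟩ := RingQuot.mkAlgHom_surjective k (FRTrel2x2 k) x
  induction y using FreeAlgebra.induction with
  | grade0 r => rw [AlgHom.commutes]; exact (Algebra.commutes r _).symm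
  | grade1 i => exact FRT_D_comm_gen k i
  | mul x y hx hy => rw [map_mul, ← mul_assoc, hx, mul_assoc, hy, mul_assoc]
  | add x y hx hy => rw [map_add, mul_add, add_mul, hx, hy]
end
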